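/- arXiv:2102.07290 — 2 statements merged into one kernel-verified Lean document; each statement's English description precedes it below -/
import Mathlib

section
/- For every positive integer n, the number of monic irreducible polynomials of degree n in F_q[x], excluding the polynomial x itself, equals (1/n) Σ_{d | n} μ(d) (q^{n/d} − 1), where μ is the Möbius function. (For n ≥ 2 this equals the usual count of monic irreducibles of degree n; for n = 1 it is q − 1.) -/
/-!
In the extension `L` of degree `n` of `F = 𝔽_q`, every `α ≠ 0` has a minimal polynomial that is
monic, irreducible, different from `X`, and of degree `d ∣ n`; conversely, every such polynomial
divides `X ^ q ^ n - X`, hence splits in `L`, with `d` distinct roots since `F` is perfect.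
Sorting the `q ^ n - 1` nonzero elements of `L` by their minimal polynomials gives
`∑_{d ∣ n} d φ_d(q) = q ^ n - 1`, and Möbius inversion gives the formula.
-/

open Polynomial

/-- The number of monic irreducible polynomials of degree `d` over `F`, excluding the
polynomial `x` itself. -/
noncomputable def phiCount (F : Type) [Field F] (d : ℕ) : ℕ :=
  Nat.card {p : Polynomial F // p.Monic ∧ Irreducible p ∧ p.natDegree = d ∧ p ≠ X}

open Module Finset

section MinimalPolynomialFibers

variable {F L : Type*} [Field F] [Fintype F] [Field L] [Fintype L] [Algebra F L]

theorem Irreducible.splits_of_natDegree_dvd_finrank {π : F[X]} (hi : Irreducible π)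
    (hd : π.natDegree ∣ finrank F L) : (π.map (algebraMap F L)).Splits := by
  have hdvd : π ∣ X ^ Fintype.card L - X := by
    rwa [Fintype.card_eq_nat_card, natCard_eq_pow_finrank (K := F),
      ← hi.natDegree_dvd_iff_dvd_X_pow_card_pow_sub_X]
  exact (FiniteField.isSplittingField_sub L F).splits.of_dvd
    (map_ne_zero (FiniteField.X_pow_card_sub_X_ne_zero F Fintype.one_lt_card))
    (Polynomial.map_dvd _ hdvd)

theorem card_filter_minpoly_eq_natDegree [DecidableEq F] {π : F[X]} (hm : π.Monic)
    (hi : Irreducible π) (hd : π.natDegree ∣ finrank F L) :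
    #{α : L | minpoly F α = π} = π.natDegree := by
  classical
  have hfiber : ({α : L | minpoly F α = π} : Finset L) =
      (π.map (algebraMap F L)).roots.toFinset := by
    ext α
    rw [mem_filter, and_iff_right (mem_univ α), Multiset.mem_toFinset,
      mem_roots (map_ne_zero hi.ne_zero), IsRoot.def, eval_map_algebraMap]
    exact ⟨fun h => h ▸ minpoly.aeval F α,
      fun h => (minpoly.eq_of_irreducible_of_monic hi h hm).symm⟩
  rw [hfiber, Multiset.toFinset_card_of_nodup
      (nodup_roots (PerfectField.separable_of_irreducible hi).map),
    ← (hi.splits_of_natDegree_dvd_finrank hd).natDegree_eq_card_roots, natDegree_map]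

end MinimalPolynomialFibers

theorem minpoly_eq_X_iff {A B : Type*} [Field A] [Ring B] [Algebra A B] [Nontrivial B] {x : B} :
    minpoly A x = X ↔ x = 0 :=
  ⟨fun h => by simpa [h] using minpoly.aeval A x, fun h => h ▸ minpoly.zero A B⟩

section CountingNonzeroElements

variable {F : Type} {L : Type*} [Field F] [Fintype F] [DecidableEq F] [Field L] [Fintype L]
  [DecidableEq L] [Algebra F L]

theorem card_filter_natDegree_minpoly_eq_mul_phiCount {d : ℕ} (hd : d ∣ finrank F L) :
    #{α : L | α ≠ 0 ∧ (minpoly F α).natDegree = d} = d * phiCount F d := by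
  set S : Finset L := {α : L | α ≠ 0 ∧ (minpoly F α).natDegree = d}
  have hmem : ∀ π, π ∈ S.image (minpoly F) ↔
      π.Monic ∧ Irreducible π ∧ π.natDegree = d ∧ π ≠ X := by
    intro π
    simp only [mem_image, S, mem_filter, mem_univ, true_and]
    constructor
    · rintro ⟨α, ⟨hα, rfl⟩, rfl⟩
      have hint := IsIntegral.of_finite F α
      exact ⟨minpoly.monic hint, minpoly.irreducible hint, rfl, minpoly_eq_X_iff.not.2 hα⟩
    · rintro ⟨hm, hi, rfl, hX⟩
      obtain ⟨α, hα⟩ : ({α : L | minpoly F α = π} : Finset L).Nonempty := by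
        rw [← card_pos, card_filter_minpoly_eq_natDegree hm hi hd]
        exact hi.natDegree_pos
      rw [mem_filter] at hα
      refine ⟨α, ⟨?_, by rw [hα.2]⟩, hα.2⟩
      rintro rfl
      exact hX (hα.2 ▸ minpoly.zero F L)
  have hfiber : ∀ π ∈ S.image (minpoly F), #{α ∈ S | minpoly F α = π} = d := by
    intro π hπ
    obtain ⟨hm, hi, rfl, hX⟩ := (hmem π).1 hπ
    rw [← card_filter_minpoly_eq_natDegree hm hi hd, filter_filter]
    congr 1
    ext α
    simp only [mem_filter, mem_univ, true_and]
    exact ⟨fun h => h.2, fun h => ⟨⟨fun h0 => hX (h ▸ minpoly_eq_X_iff.2 h0), h ▸ rfl⟩, h⟩⟩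
  have hphi : #(S.image (minpoly F)) = phiCount F d := by
    rw [phiCount, ← Set.ncard_coe_finset, ← Nat.card_coe_set_eq]
    congr
    ext π
    exact hmem π
  rw [card_eq_sum_card_fiberwise fun α hα => mem_image_of_mem (minpoly F) hα,
    sum_congr rfl hfiber, sum_const, smul_eq_mul, hphi, mul_comm]

theorem sum_divisors_mul_phiCount_eq_card_sub_one :
    ∑ d ∈ (finrank F L).divisors, d * phiCount F d = Fintype.card L - 1 := by
  have hmaps : Set.MapsTo (fun α => (minpoly F α).natDegree) ({α : L | α ≠ 0} : Finset L)
      (finrank F L).divisors := fun α _ =>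
    Nat.mem_divisors.2 ⟨minpoly.degree_dvd (IsIntegral.of_finite F α), finrank_pos.ne'⟩
  rw [← card_univ, ← card_erase_of_mem (mem_univ 0), ← filter_ne',
    card_eq_sum_card_fiberwise hmaps]
  refine sum_congr rfl fun d hd => ?_
  rw [filter_filter, card_filter_natDegree_minpoly_eq_mul_phiCount (Nat.dvd_of_mem_divisors hd)]

end CountingNonzeroElements

theorem sum_divisors_mul_phiCount_eq (F : Type) [Field F] [Fintype F] {n : ℕ} (hn : n ≠ 0) :
    ∑ d ∈ n.divisors, d * phiCount F d = Fintype.card F ^ n - 1 := by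
  classical
  obtain ⟨p, _⟩ := CharP.exists F
  have : Fact p.Prime := ⟨CharP.char_is_prime F p⟩
  have : NeZero n := ⟨hn⟩
  have := Fintype.ofFinite (FiniteField.Extension F p n)
  have h := sum_divisors_mul_phiCount_eq_card_sub_one (F := F) (L := FiniteField.Extension F p n)
  rwa [FiniteField.finrank_extension, Fintype.card_eq_nat_card, FiniteField.natCard_extension,
    ← Fintype.card_eq_nat_card] at h

/-- For every `n ≥ 1` and finite field `F` with `q` elements, the number of monic
irreducible polynomials of degree `n` in `F[x]` other than `x` equals
`(1/n) ∑_{d ∣ n} μ(d) (q^{n/d} - 1)`. -/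
theorem count_monic_irreducible_ne_X (F : Type) [Field F] [Fintype F] (n : ℕ)
    (hn : 0 < n) :
    (phiCount F n : ℚ) =
      (1 / n) * ∑ d ∈ n.divisors,
        (ArithmeticFunction.moebius d : ℚ) * ((Fintype.card F : ℚ) ^ (n / d) - 1) := by
  have hsum : ∀ m > 0, ∑ d ∈ m.divisors, (d * phiCount F d : ℚ) = Fintype.card F ^ m - 1 := by
    intro m hm
    rw [← Nat.cast_one, ← Nat.cast_pow, ← Nat.cast_sub (Nat.one_le_pow _ _ Fintype.card_pos)]
    exact_mod_cast sum_divisors_mul_phiCount_eq F hm.ne'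
  have hinv := ArithmeticFunction.sum_eq_iff_sum_mul_moebius_eq.1 hsum n hn
  rw [Nat.sum_divisorsAntidiagonal fun a b => (ArithmeticFunction.moebius a : ℚ) * (_ ^ b - 1)]
    at hinv
  rw [hinv]
  field_simp
end

section
/- The following identity of formal power series in X over Q(q) holds: 1 + Σ_{λ ∈ P} q^{−ℓ(λ)} / b_λ(q^{−1}) · X^{|λ|} = Π_{n=1}^∞ Π_{i=0}^∞ (1 − q^i X^n), where the sum runs over all nonempty partitions λ. -/
/-- `λ'_i`: the number of parts of the partition (multiset of parts) `λ` that are `≥ i`. -/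
def mconj (lam : Multiset ℕ) (i : ℕ) : ℕ := (lam.filter (fun p => i ≤ p)).card

/-- `ℓ(λ)`: the number of parts of `λ`. -/
def mlen (lam : Multiset ℕ) : ℕ := Multiset.card lam

/-- `⟨λ, λ⟩ = ∑_{i ≥ 1} (λ'_i)²` (for a partition with positive parts all terms with
`i > |λ|` vanish, so the sum may be truncated at the weight `|λ| = lam.sum`). -/
def minner (lam : Multiset ℕ) : ℕ := ∑ i ∈ Finset.Icc 1 lam.sum, (mconj lam i) ^ 2

/-- `n_i`: the number of parts of `λ` equal to `i`. -/
def mmult (lam : Multiset ℕ) (i : ℕ) : ℕ := (lam.filter (fun p => p = i)).card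
/-- `b_λ(t) = ∏_{i ≥ 1} φ_{n_i}(t)` where `φ_r(t) = (1-t)(1-t²)⋯(1-tʳ)` and `n_i` is the
number of parts of `λ` equal to `i` (factors with `i > |λ|` are `1`). -/
def bval {K : Type} [Field K] (lam : Multiset ℕ) (t : K) : K :=
  ∏ i ∈ Finset.Icc 1 lam.sum, ∏ j ∈ Finset.Icc 1 (mmult lam i), (1 - t ^ j)

/-- The field `ℚ((q))` of formal Laurent series, in which the variable `q` is invertible
and infinite products like `∏_i (1 - qⁱ Xⁿ)` make sense coefficientwise (the topology on
`ℚ((q))` being the `q`-adic one coming from its valuation). -/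
noncomputable abbrev Kq : Type := LaurentSeries ℚ

/-- The variable `q`, as an element of `ℚ((q))`. -/
noncomputable def qv : Kq := HahnSeries.single 1 1

/-- The product (coefficientwise) topology on `ℚ((q))⟦X⟧`. -/
noncomputable instance : TopologicalSpace (PowerSeries Kq) :=
  inferInstanceAs (TopologicalSpace ((Unit →₀ ℕ) → Kq))

/-!
Euler's identity `∏_{i ≥ 0} (1 - qⁱ z) = ∑_r a_r zʳ` holds with `a_r = q⁻ʳ / φ_r(q⁻¹)`, and already
the truncation `∏_{i < M} (1 - qⁱ z)` has the coefficients `a_r` modulo `q^M`: since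
`(z; q)_{M+1} = (1 - z) (qz; q)_M`, the differences `δ_{M,r}` between the truncated
coefficients and `a_r` satisfy
`δ_{M+1,r+1} = q^{r+1} δ_{M,r+1} - q^r δ_{M,r}`, so each step in `M` gains a factor `q`.
Substituting `z = Xⁿ` and multiplying over `n`, the coefficient of `X^d` becomes the sum over the
partitions `λ` of `d` of `∏_i a_{n_i(λ)}`, which is the left-hand side. Working in `ℚ⟦q⟧`, the
coefficient of `X^d` of any finite subproduct containing the factors with `n ≤ d`, `i < M` is
therefore congruent to that sum modulo `q^M`, and `q^M → 0` in `ℚ((q))`.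
-/

open Finset PowerSeries
open scoped LaurentSeries

theorem Ideal.prod_sub_prod_mem {ι R : Type*} [CommRing R] (I : Ideal R) {s : Finset ι}
    {f g : ι → R} (h : ∀ i ∈ s, f i - g i ∈ I) : ∏ i ∈ s, f i - ∏ i ∈ s, g i ∈ I := by
  rw [← Ideal.Quotient.eq, map_prod, map_prod]
  exact prod_congr rfl fun i hi => Ideal.Quotient.eq.2 (h i hi)

theorem Ideal.prod_sub_prod_mem_of_subset {ι R : Type*} [DecidableEq ι] [CommRing R]
    (I : Ideal R) {s t : Finset ι} (hst : s ⊆ t) {f : ι → R} (h : ∀ i ∈ t \ s, f i - 1 ∈ I) :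
    ∏ i ∈ t, f i - ∏ i ∈ s, f i ∈ I := by
  rw [← prod_sdiff hst, mul_comm, ← mul_sub_one, ← prod_const_one (s := t \ s)]
  exact I.mul_mem_left _ (I.prod_sub_prod_mem h)

namespace PowerSeries

variable {R : Type*} [CommRing R]

theorem C_dvd_of_forall_dvd_coeff {c : R} {f : R⟦X⟧} (h : ∀ n, c ∣ coeff n f) : C c ∣ f := by
  choose g hg using h
  exact ⟨mk g, by ext n; simp [coeff_C_mul, hg]⟩

theorem mem_span_C_X_pow_of_C_dvd {c : R} {d : ℕ} {f : R⟦X⟧} (h : C c ∣ f) :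
    f ∈ Ideal.span {C c, X ^ (d + 1)} :=
  Ideal.span_mono (by simp) (Ideal.mem_span_singleton.2 h)

theorem mem_span_C_X_pow_of_X_pow_dvd {c : R} {d : ℕ} {f : R⟦X⟧} (h : X ^ (d + 1) ∣ f) :
    f ∈ Ideal.span {C c, X ^ (d + 1)} :=
  Ideal.span_mono (by simp) (Ideal.mem_span_singleton.2 h)

theorem dvd_coeff_of_mem_span_C_X_pow {c : R} {d : ℕ} {f : R⟦X⟧}
    (h : f ∈ Ideal.span {C c, X ^ (d + 1)}) : c ∣ coeff d f := by
  obtain ⟨u, w, rfl⟩ := Ideal.mem_span_pair.1 h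
  rw [map_add, coeff_mul_C, coeff_mul_X_pow', if_neg (by omega), add_zero]
  exact dvd_mul_left c _

section qPochhammer

variable (q : R)

noncomputable def qPochhammer (M : ℕ) : R⟦X⟧ := ∏ i ∈ range M, (1 - C (q ^ i) * X)

theorem constantCoeff_qPochhammer (M : ℕ) : constantCoeff (qPochhammer q M) = 1 := by
  simp [qPochhammer, map_prod]

theorem qPochhammer_succ (M : ℕ) :
    qPochhammer q (M + 1) = (1 - X) * rescale q (qPochhammer q M) := by
  have hC : ∀ r, rescale q (C r) = C r := fun r => by
    ext n; rcases n with _ | n <;> simp [coeff_rescale, coeff_C]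
  have hfactor : ∀ i, rescale q (1 - C (q ^ i) * X) = 1 - C (q ^ (i + 1)) * X := fun i => by
    rw [map_sub, map_one, map_mul, hC, rescale_X, pow_succ, map_mul, mul_assoc]
  rw [qPochhammer, qPochhammer, prod_range_succ', map_prod, mul_comm, pow_zero, map_one, one_mul]
  simp only [hfactor]

theorem coeff_succ_qPochhammer_succ (M r : ℕ) :
    coeff (r + 1) (qPochhammer q (M + 1)) =
      q ^ (r + 1) * coeff (r + 1) (qPochhammer q M) - q ^ r * coeff r (qPochhammer q M) := by
  rw [qPochhammer_succ, sub_mul, one_mul, map_sub, coeff_succ_X_mul, coeff_rescale, coeff_rescale]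

/-- The hypotheses on `a` say that `a r = (-1)ʳ q^(r(r-1)/2) / φ_r(q)` when the `1 - q^j` are
invertible: the coefficients of the infinite product `∏_{i ≥ 0} (1 - qⁱ X)`. -/
theorem pow_dvd_coeff_qPochhammer_sub {a : ℕ → R} (h0 : a 0 = 1)
    (hrec : ∀ r, (1 - q ^ (r + 1)) * a (r + 1) = -(q ^ r * a r)) (M r : ℕ) :
    q ^ M ∣ coeff r (qPochhammer q M) - a r := by
  induction M generalizing r with
  | zero => simp
  | succ M ih =>
    have hconst : ∀ M, coeff 0 (qPochhammer q M) - a 0 = 0 := fun M => by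
      rw [coeff_zero_eq_constantCoeff_apply, constantCoeff_qPochhammer, h0, sub_self]
    cases r with
    | zero => rw [hconst]; exact dvd_zero _
    | succ r =>
      have hsplit : coeff (r + 1) (qPochhammer q (M + 1)) - a (r + 1) =
          q ^ (r + 1) * (coeff (r + 1) (qPochhammer q M) - a (r + 1)) -
            q ^ r * (coeff r (qPochhammer q M) - a r) := by
        rw [coeff_succ_qPochhammer_succ]
        linear_combination (-1 : R) * hrec r
      rw [hsplit]
      refine dvd_sub ?_ ?_
      · rw [pow_succ' q M]
        exact mul_dvd_mul (dvd_pow_self q r.succ_ne_zero) (ih _)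
      · rcases r.eq_zero_or_pos with rfl | hr
        · rw [hconst, mul_zero]
          exact dvd_zero _
        · rw [pow_succ']
          exact mul_dvd_mul (dvd_pow_self q hr.ne') (ih r)

noncomputable def eulerFactor (t : ℕ+ × ℕ) : R⟦X⟧ := 1 - C (q ^ t.2) * X ^ (t.1 : ℕ)

theorem expand_qPochhammer (n : ℕ+) (M : ℕ) :
    expand n n.ne_zero (qPochhammer q M) = ∏ i ∈ range M, eulerFactor q (n, i) := by
  simp [qPochhammer, eulerFactor, map_prod, expand_C]

theorem eulerFactor_sub_one_mem_span {d M : ℕ} {t : ℕ+ × ℕ} (ht : M ≤ t.2 ∨ d < t.1) :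
    eulerFactor q t - 1 ∈ Ideal.span {C (q ^ M), X ^ (d + 1)} := by
  rw [eulerFactor, sub_sub_cancel_left, neg_mem_iff]
  rcases ht with ht | ht
  · exact mem_span_C_X_pow_of_C_dvd (Dvd.dvd.mul_right (map_dvd C (pow_dvd_pow q ht)) _)
  · exact mem_span_C_X_pow_of_X_pow_dvd (Dvd.dvd.mul_left (pow_dvd_pow X ht) _)

theorem pow_dvd_coeff_prod_eulerFactor_sub {a : ℕ → R} (h0 : a 0 = 1)
    (hrec : ∀ r, (1 - q ^ (r + 1)) * a (r + 1) = -(q ^ r * a r)) {d M : ℕ} {N : Finset ℕ+}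
    (hN : ∀ n : ℕ+, (n : ℕ) ≤ d → n ∈ N) {s : Finset (ℕ+ × ℕ)} (hs : N ×ˢ range M ⊆ s) :
    q ^ M ∣ coeff d (∏ t ∈ s, eulerFactor q t) - coeff d (∏ n ∈ N, expand n n.ne_zero (mk a)) := by
  set J : Ideal R⟦X⟧ := Ideal.span {C (q ^ M), X ^ (d + 1)}
  have hfar : ∏ t ∈ s, eulerFactor q t - ∏ t ∈ N ×ˢ range M, eulerFactor q t ∈ J := by
    refine J.prod_sub_prod_mem_of_subset hs fun t ht => eulerFactor_sub_one_mem_span q ?_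
    rw [mem_sdiff, mem_product, mem_range, not_and_or, not_lt] at ht
    rcases ht.2 with h | h
    · exact .inr (lt_of_not_ge fun h' => h (hN _ h'))
    · exact .inl h
  have hnear : ∏ t ∈ N ×ˢ range M, eulerFactor q t - ∏ n ∈ N, expand n n.ne_zero (mk a) ∈ J := by
    rw [prod_product]
    refine J.prod_sub_prod_mem fun n _ => ?_
    obtain ⟨g, hg⟩ := C_dvd_of_forall_dvd_coeff (f := qPochhammer q M - mk a)
      fun r => by simpa using pow_dvd_coeff_qPochhammer_sub q h0 hrec M r
    rw [← expand_qPochhammer, ← map_sub, hg, map_mul, expand_C]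
    exact mem_span_C_X_pow_of_C_dvd (dvd_mul_right _ _)
  rw [← map_sub, ← sub_add_sub_cancel _ (∏ t ∈ N ×ˢ range M, eulerFactor q t)]
  exact dvd_coeff_of_mem_span_C_X_pow (J.add_mem hfar hnear)

end qPochhammer

theorem X_pow_dvd_expand_mk_sub_one {a : ℕ → R} (h0 : a 0 = 1) {d : ℕ} {n : ℕ+} (hn : d < n) :
    X ^ (d + 1) ∣ expand n n.ne_zero (mk a) - 1 := by
  refine X_pow_dvd_iff.2 fun m hm => ?_
  rw [map_sub, coeff_expand, coeff_mk, coeff_one]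
  rcases m.eq_zero_or_pos with rfl | hm0
  · simp [h0]
  · rw [if_neg (Nat.not_dvd_of_pos_of_lt hm0 (by omega)), if_neg hm0.ne', sub_zero]

open scoped WithPiTopology in
theorem expand_mk_eq_one_add_tsum [TopologicalSpace R] [T2Space R] {a : ℕ → R} (h0 : a 0 = 1)
    (n : ℕ+) : expand n n.ne_zero (mk a) = 1 + ∑' j, a (j + 1) • X ^ ((n : ℕ) * (j + 1)) := by
  ext m
  rw [map_add, (Nat.Partition.summable_genFun_term' (fun _ c => a c) n.ne_zero).map_tsum _
    (WithPiTopology.continuous_coeff R m)]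
  simp only [LinearMap.map_smul_of_tower, coeff_X_pow, smul_eq_mul, mul_ite, mul_one, mul_zero,
    coeff_expand, coeff_mk, coeff_one]
  by_cases hdvd : (n : ℕ) ∣ m
  · obtain ⟨k, rfl⟩ := hdvd
    rcases k with _ | k
    · simp [h0]
    · rw [tsum_eq_single k fun j hj => if_neg (by simpa using hj.symm)]
      simp [n.ne_zero]
  · have hm : m ≠ 0 := by rintro rfl; exact hdvd (dvd_zero _)
    rw [if_neg hdvd, if_neg hm, zero_add, tsum_congr fun j => if_neg fun h => hdvd ⟨_, h⟩,
      tsum_zero]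

open scoped WithPiTopology in
/-- Any Hausdorff topology on `R` lets us read this coefficient off
`Nat.Partition.hasProd_genFun`; the proof uses the discrete one. -/
theorem coeff_prod_expand_mk_eq_coeff_genFun {a : ℕ → R} (h0 : a 0 = 1) {d : ℕ} {N : Finset ℕ+}
    (hN : ∀ n : ℕ+, (n : ℕ) ≤ d → n ∈ N) :
    coeff d (∏ n ∈ N, expand n n.ne_zero (mk a)) =
      coeff d (Nat.Partition.genFun fun _ c => a c) := by
  let : TopologicalSpace R := ⊥
  have : DiscreteTopology R := ⟨rfl⟩
  have hprod : HasProd (fun n : ℕ+ => expand n n.ne_zero (mk a))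
      (Nat.Partition.genFun fun _ c => a c) := by
    have hreindex : (fun n : ℕ+ => expand n n.ne_zero (mk a)) ∘ Equiv.pnatEquivNat.symm =
        fun i => 1 + ∑' j, a (j + 1) • X ^ ((i + 1) * (j + 1)) :=
      funext fun i => expand_mk_eq_one_add_tsum h0 i.succPNat
    have hgenFun := Nat.Partition.hasProd_genFun (R := R) (fun _ c => a c)
    rw [← Equiv.pnatEquivNat.symm.hasProd_iff, hreindex]
    exact hgenFun
  have hconst : ∀ s ⊇ N, coeff d (∏ n ∈ s, expand n n.ne_zero (mk a)) =
      coeff d (∏ n ∈ N, expand n n.ne_zero (mk a)) := fun s hs => by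
    rw [← sub_eq_zero, ← map_sub, ← zero_dvd_iff]
    refine dvd_coeff_of_mem_span_C_X_pow (Ideal.prod_sub_prod_mem_of_subset _ hs fun n hn => ?_)
    refine mem_span_C_X_pow_of_X_pow_dvd (X_pow_dvd_expand_mk_sub_one h0 ?_)
    exact lt_of_not_ge fun h => (mem_sdiff.1 hn).2 (hN n h)
  refine tendsto_nhds_unique (tendsto_atTop_of_eventually_const hconst) ?_
  exact ((WithPiTopology.continuous_coeff R d).tendsto _).comp hprod

variable {k : Type*} [Field k]

noncomputable def eulerCoeff : ℕ → k⟦X⟧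
  | 0 => 1
  | r + 1 => -(X ^ r * eulerCoeff r) * (1 - X ^ (r + 1))⁻¹

theorem one_sub_X_pow_mul_eulerCoeff_succ (r : ℕ) :
    (1 - X ^ (r + 1) : k⟦X⟧) * eulerCoeff (r + 1) = -(X ^ r * eulerCoeff r) := by
  rw [eulerCoeff, mul_comm, mul_assoc, PowerSeries.inv_mul_cancel _ (by simp), mul_one]

end PowerSeries

noncomputable def eulerTerm {K : Type*} [Field K] (t : K) (r : ℕ) : K :=
  t ^ r / ∏ j ∈ Icc 1 r, (1 - t ^ j)

theorem eulerTerm_succ {K : Type*} [Field K] (t : K) (r : ℕ) :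
    eulerTerm t (r + 1) = eulerTerm t r * (t / (1 - t ^ (r + 1))) := by
  rw [eulerTerm, eulerTerm, prod_Icc_succ_top (by omega), pow_succ, mul_div_mul_comm]

theorem one_sub_pow_mul_eulerTerm_inv_succ {K : Type*} [Field K] {q : K} (hq : q ≠ 0) {r : ℕ}
    (hr : 1 - q ^ (r + 1) ≠ 0) :
    (1 - q ^ (r + 1)) * eulerTerm q⁻¹ (r + 1) = -(q ^ r * eulerTerm q⁻¹ r) := by
  have hqq := mul_inv_cancel₀ hq
  have hqqr : q ^ r * q⁻¹ ^ r = 1 := by rw [← mul_pow, hqq, one_pow]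
  have key : (1 - q ^ (r + 1)) * q⁻¹ = -q ^ r * (1 - q⁻¹ ^ (r + 1)) := by
    linear_combination (-q ^ r) * hqq - q⁻¹ * hqqr
  have hr' : 1 - q⁻¹ ^ (r + 1) ≠ 0 := fun h => by
    rw [h, mul_zero, mul_eq_zero, _root_.inv_eq_zero] at key
    exact key.elim hr hq
  rw [eulerTerm_succ, mul_left_comm, ← mul_div_assoc, key, mul_div_cancel_right₀ _ hr']
  ring

theorem pow_mlen_div_bval {K : Type} [Field K] (t : K) {lam : Multiset ℕ} (hlam : 0 ∉ lam) :
    t ^ mlen lam / bval lam t = ∏ i ∈ lam.toFinset, eulerTerm t (lam.count i) := by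
  have hsub : lam.toFinset ⊆ Icc 1 lam.sum := fun i hi => by
    rw [Multiset.mem_toFinset] at hi
    exact mem_Icc.2 ⟨Nat.one_le_iff_ne_zero.2 (ne_of_mem_of_not_mem hi hlam),
      Multiset.le_sum_of_mem hi⟩
  have hbval : bval lam t = ∏ i ∈ lam.toFinset, ∏ j ∈ Icc 1 (lam.count i), (1 - t ^ j) := by
    simp only [bval, mmult, Multiset.filter_eq', Multiset.card_replicate]
    refine (prod_subset hsub fun i _ hi => ?_).symm
    rw [Multiset.count_eq_zero.2 (by simpa using hi)]
    rfl
  rw [hbval, mlen, ← Multiset.toFinset_sum_count_eq, ← prod_pow_eq_pow_sum, ← prod_div_distrib]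
  rfl

namespace LaurentSeries

open Filter Topology WithZero MonoidWithZeroHom.ValueGroup₀

variable {K : Type*} [Field K]

theorem tendsto_coe_of_forall_X_pow_dvd {α : Type*} {l : Filter α} {f : α → K⟦X⟧} {g : K⟦X⟧}
    (h : ∀ M : ℕ, ∀ᶠ i in l, X ^ M ∣ f i - g) :
    Tendsto (fun i => (f i : K⸨X⸩)) l (𝓝 (g : K⸨X⸩)) := by
  intro U hU
  rw [Filter.mem_map]
  obtain ⟨γ, hγ⟩ := Valued.mem_nhds.mp hU
  set D := -(log (embedding γ.1) - 1)
  have hD : exp (-D) < embedding γ.1 := by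
    rw [← lt_log_iff_exp_lt (by simp)]
    simp [D]
  filter_upwards [h D.toNat] with i ⟨w, hw⟩
  apply hγ
  rw [Set.mem_ofPred_eq, Valuation.restrict_lt_iff_lt_embedding, ← PowerSeries.coe_sub, hw,
    PowerSeries.coe_mul, PowerSeries.coe_pow, map_mul, valuation_X_pow]
  refine lt_of_le_of_lt ?_ hD
  calc exp (-(D.toNat : ℤ)) * Valued.v (w : K⸨X⸩) ≤ exp (-(D.toNat : ℤ)) * 1 :=
        mul_le_mul_right ((val_le_one_iff_eq_coe K _).2 ⟨w, rfl⟩) _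
    _ ≤ exp (-D) := by rw [mul_one, exp_le_exp]; omega

theorem coe_eulerCoeff (r : ℕ) :
    ((eulerCoeff r : K⟦X⟧) : K⸨X⸩) = eulerTerm (HahnSeries.single 1 1 : K⸨X⸩)⁻¹ r := by
  have hX : ((X : K⟦X⟧) : K⸨X⸩) = HahnSeries.single 1 1 := HahnSeries.ofPowerSeries_X
  have hq : (HahnSeries.single 1 1 : K⸨X⸩) ≠ 0 := by simp
  have hfac : ∀ j, (1 : K⸨X⸩) - HahnSeries.single 1 1 ^ (j + 1) ≠ 0 := fun j => by
    rw [← hX, ← PowerSeries.coe_pow, ← PowerSeries.coe_one, ← PowerSeries.coe_sub, Ne,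
      ← map_zero (HahnSeries.ofPowerSeries ℤ K), HahnSeries.ofPowerSeries_injective.eq_iff]
    intro h
    simpa using congrArg constantCoeff h
  induction r with
  | zero => simp [eulerCoeff, eulerTerm]
  | succ r ih =>
    apply mul_left_cancel₀ (hfac r)
    have h := congrArg (HahnSeries.ofPowerSeries ℤ K) (one_sub_X_pow_mul_eulerCoeff_succ r)
    simp only [map_mul, map_sub, map_one, map_pow, map_neg, hX] at h
    rw [h, ih, one_sub_pow_mul_eulerTerm_inv_succ hq (hfac r)]

end LaurentSeries

theorem mk_sum_pow_mlen_div_bval_eq_map_genFun :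
    (PowerSeries.mk fun n => if n = 0 then (1 : Kq) else
        ∑ lam : n.Partition, (qv⁻¹) ^ mlen lam.parts / bval lam.parts qv⁻¹) =
      map (HahnSeries.ofPowerSeries ℤ ℚ) (Nat.Partition.genFun fun _ c => eulerCoeff c) := by
  refine PowerSeries.ext fun d => ?_
  rw [coeff_mk, coeff_map, Nat.Partition.coeff_genFun, map_sum]
  split_ifs with hd
  · subst hd
    simp
  · refine Finset.sum_congr rfl fun p _ => ?_
    rw [pow_mlen_div_bval _ fun h => (p.parts_pos h).false, Finsupp.prod, map_prod]
    simp only [Multiset.toFinsupp_support, Multiset.toFinsupp_apply]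
    exact prod_congr rfl fun i _ => (LaurentSeries.coe_eulerCoeff _).symm

/-- The `g = 1` specialization of Hua's product formula, a `q`-deformed identity of Euler
type:  `1 + ∑_λ q^{-ℓ(λ)}/b_λ(q⁻¹) · X^{|λ|} = ∏_{n ≥ 1} ∏_{i ≥ 0} (1 - qⁱ Xⁿ)`,
the sum running over all (nonempty) partitions `λ`.  Both sides are formal power series
in `X` whose coefficients are expanded in the field `ℚ((q))`. -/
theorem hua_identity_g_one :
    (PowerSeries.mk fun n => if n = 0 then (1 : Kq) else
        ∑ lam : n.Partition, (qv⁻¹) ^ mlen lam.parts / bval lam.parts qv⁻¹) =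
      ∏' t : ℕ+ × ℕ,
        (1 - PowerSeries.C (R := Kq) (qv ^ t.2) * (PowerSeries.X : PowerSeries Kq) ^ (t.1 : ℕ)) := by
  set ι := HahnSeries.ofPowerSeries ℤ ℚ
  have hfactor : (fun t : ℕ+ × ℕ => 1 - C (qv ^ t.2) * X ^ (t.1 : ℕ)) =
      fun t => map ι (eulerFactor X t) := by
    funext t
    simp only [eulerFactor, map_sub, map_one, map_mul, map_C, map_pow, map_X, ι,
      HahnSeries.ofPowerSeries_X, qv]
  have : T2Space Kq⟦X⟧ := WithPiTopology.instT2Space Kq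
  rw [mk_sum_pow_mlen_div_bval_eq_map_genFun, hfactor]
  refine (HasProd.tprod_eq ?_).symm
  refine (WithPiTopology.tendsto_iff_coeff_tendsto Kq _ _ _).2 fun d => ?_
  simp only [← map_prod, coeff_map]
  refine LaurentSeries.tendsto_coe_of_forall_X_pow_dvd fun M => ?_
  have hN : ∀ n : ℕ+, (n : ℕ) ≤ d → n ∈ Iic d.toPNat' := fun n hn => by
    rw [mem_Iic, ← PNat.coe_le_coe, Nat.toPNat'_coe, if_pos (n.pos.trans_le hn)]
    exact hn
  filter_upwards [Filter.eventually_ge_atTop (Iic d.toPNat' ×ˢ range M)] with s hs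
  rw [← coeff_prod_expand_mk_eq_coeff_genFun rfl hN]
  exact pow_dvd_coeff_prod_eulerFactor_sub X rfl one_sub_X_pow_mul_eulerCoeff_succ hN hs
end
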